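/- arXiv:math/0504365 — 4 statements merged into one kernel-verified Lean document; each statement's English description precedes it below -/
import Mathlib

section
/- Let Φ : ℝⁿ × ℝ → ℝⁿ be a C² map (a C² action of ℝ on ℝⁿ). Suppose there exist x₀ ∈ ℝⁿ and t₀ ∈ ℝ such that the partial derivative ∂Φ/∂t(x₀, t₀) = 0, and suppose the mixed partial derivative ∂²Φ/∂x∂t(x₀, t₀) (i.e., the total derivative in x at x₀ of the map x ↦ ∂Φ/∂t(x, t₀), viewed as a linear map ℝⁿ → ℝⁿ) is non-singular. Then for every ε > 0 there exist z₀ ∈ ℝⁿ, τ₀ ∈ ℝ, and δ > 0 such that Φ(z₀, τ₀) = Φ(z₀, τ₀ + δ) and ‖Φ(z₀, t) − Φ(x₀, t₀)‖ < ε for all t with τ₀ ≤ t < τ₀ + δ. -/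
/-!
Write `∂ₜΦ` for the time derivative and `G (δ, x) = ∫₀¹ ∂ₜΦ (x, t₀ + s δ) ds` for its mean over
`[t₀, t₀ + δ]` (`meanTimeDeriv`), so that `δ • G (δ, x) = Φ (x, t₀ + δ) - Φ (x, t₀)`. Unlike the
difference quotient, `G` is `C¹` across `δ = 0` because `Φ` is `C²`; it vanishes at `(0, x₀)`, where
its partial derivative in `x` is the invertible mixed derivative. The implicit function theorem
then gives points `z δ → x₀` with `G (δ, z δ) = 0`, i.e. loops `Φ (z δ, t₀ + δ) = Φ (z δ, t₀)`,
and for small `δ > 0` continuity keeps the whole orbit segment close to `Φ (x₀, t₀)`.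
-/

open Filter Topology Set

theorem IsCompact.eventually_forall_norm_lt {X Y E : Type*} [TopologicalSpace X]
    [TopologicalSpace Y] [SeminormedAddCommGroup E] {K : Set Y} (hK : IsCompact K)
    {f : X → Y → E} (hf : Continuous ↿f) (x₀ : X) :
    ∀ᶠ x in 𝓝 x₀, ∀ y ∈ K, ‖f x y‖ < ‖f x₀ y‖ + 1 :=
  hK.eventually_forall_of_forall_eventually fun _ _ =>
    hf.norm.continuousAt.eventually_lt
      ((hf.uncurry_left x₀).norm.comp continuous_snd |>.add continuous_const).continuousAt
      (lt_add_one _)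

theorem contDiff_one_parametric_intervalIntegral
    {H E : Type*} [NormedAddCommGroup H] [NormedSpace ℝ H] [NormedAddCommGroup E]
    [NormedSpace ℝ E] {F : H → ℝ → E} (hF : ContDiff ℝ 1 ↿F) (a b : ℝ) :
    ContDiff ℝ 1 fun x => ∫ t in a..b, F x t := by
  set F' : H → ℝ → H →L[ℝ] E := fun x t => fderiv ℝ ↿F (x, t) ∘L .inl ℝ H ℝ
  have hF'_cont : Continuous ↿F' := (hF.continuous_fderiv one_ne_zero).clm_comp continuous_const
  have hF_diff (x : H) (t : ℝ) : HasFDerivAt (F · t) (F' x t) x := by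
    have := (hF.differentiable one_ne_zero (x, t)).hasFDerivAt.comp x
      (hasFDerivAt_prodMk_left (𝕜 := ℝ) x t)
    exact this
  refine contDiff_one_iff_hasFDerivAt.2 ⟨fun x => ∫ t in a..b, F' x t,
    intervalIntegral.continuous_parametric_intervalIntegral_of_continuous' hF'_cont a b,
    fun x₀ => ?_⟩
  have := secondCountableTopologyEither_of_left ℝ (H →L[ℝ] E)
  have hF_cont (x : H) : Continuous (F x) := hF.continuous.uncurry_left x
  exact intervalIntegral.hasFDerivAt_integral_of_dominated_of_fderiv_le
    (isCompact_uIcc.eventually_forall_norm_lt hF'_cont x₀)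
    (Eventually.of_forall fun x => (hF_cont x).aestronglyMeasurable)
    ((hF_cont x₀).intervalIntegrable a b)
    (hF'_cont.uncurry_left x₀).aestronglyMeasurable
    (Eventually.of_forall fun t ht x hx => (hx t (uIoc_subset_uIcc ht)).le)
    (((hF'_cont.uncurry_left x₀).norm.add continuous_const).intervalIntegrable a b)
    (Eventually.of_forall fun t _ x _ => hF_diff x t)

theorem ContinuousLinearMap.isInvertible_of_bijective {𝕜 E F : Type*} [NontriviallyNormedField 𝕜]
    [NormedAddCommGroup E] [NormedSpace 𝕜 E] [CompleteSpace E] [NormedAddCommGroup F]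
    [NormedSpace 𝕜 F] [CompleteSpace F] {f : E →L[𝕜] F} (hf : Function.Bijective f) :
    f.IsInvertible :=
  ⟨.ofBijective f (LinearMap.ker_eq_bot.2 hf.1) (LinearMap.range_eq_top.2 hf.2),
    ContinuousLinearEquiv.coe_ofBijective ..⟩

noncomputable section TimeDeriv

variable {E F : Type*} [NormedAddCommGroup E] [NormedSpace ℝ E] [NormedAddCommGroup F]
  [NormedSpace ℝ F] {Φ : E × ℝ → F}

def timeDeriv (Φ : E × ℝ → F) (p : E × ℝ) : F :=
  fderiv ℝ Φ p (0, 1)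

theorem hasDerivAt_timeDeriv {x : E} {t : ℝ} (hΦ : DifferentiableAt ℝ Φ (x, t)) :
    HasDerivAt (fun s => Φ (x, s)) (timeDeriv Φ (x, t)) t :=
  hΦ.hasFDerivAt.comp_hasDerivAt t ((hasDerivAt_const t x).prodMk (hasDerivAt_id t))

theorem ContDiff.timeDeriv {n : WithTop ℕ∞} (hΦ : ContDiff ℝ (n + 1) Φ) :
    ContDiff ℝ n (timeDeriv Φ) :=
  (hΦ.fderiv_right le_rfl).clm_apply contDiff_const

def meanTimeDeriv (Φ : E × ℝ → F) (t₀ : ℝ) (q : ℝ × E) : F :=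
  ∫ s in (0 : ℝ)..1, timeDeriv Φ (q.2, t₀ + s * q.1)

theorem contDiff_meanTimeDeriv (hΦ : ContDiff ℝ 2 Φ) (t₀ : ℝ) :
    ContDiff ℝ 1 (meanTimeDeriv Φ t₀) :=
  contDiff_one_parametric_intervalIntegral
    (F := fun (q : ℝ × E) s => timeDeriv Φ (q.2, t₀ + s * q.1))
    ((ContDiff.timeDeriv (n := 1) hΦ).comp (by fun_prop)) 0 1

variable [CompleteSpace F]

theorem meanTimeDeriv_zero_left (t₀ : ℝ) (x : E) :
    meanTimeDeriv Φ t₀ (0, x) = timeDeriv Φ (x, t₀) := by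
  simp [meanTimeDeriv]

theorem smul_meanTimeDeriv (hΦ : ContDiff ℝ 1 Φ) (t₀ : ℝ) (q : ℝ × E) :
    q.1 • meanTimeDeriv Φ t₀ q = Φ (q.2, t₀ + q.1) - Φ (q.2, t₀) := by
  obtain ⟨δ, x⟩ := q
  have hcont : Continuous fun s : ℝ => timeDeriv Φ (x, t₀ + s * δ) :=
    (ContDiff.timeDeriv (n := 0) hΦ).continuous.comp (by fun_prop)
  have hpath (s : ℝ) : HasDerivAt (fun s => Φ (x, t₀ + s * δ))
      (δ • timeDeriv Φ (x, t₀ + s * δ)) s := by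
    have := (hasDerivAt_timeDeriv (x := x) (hΦ.differentiable one_ne_zero _)).scomp s
      (((hasDerivAt_id s).mul_const δ).const_add t₀)
    simpa [Function.comp_def] using this
  have := intervalIntegral.integral_eq_sub_of_hasDerivAt (fun s _ => hpath s)
    ((hcont.const_smul δ).intervalIntegrable 0 1)
  simpa [meanTimeDeriv, intervalIntegral.integral_smul] using this

end TimeDeriv

theorem exists_loops_tendsto {E F : Type*} [NormedAddCommGroup E] [NormedSpace ℝ E]
    [CompleteSpace E] [NormedAddCommGroup F] [NormedSpace ℝ F] [CompleteSpace F]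
    {Φ : E × ℝ → F} (hΦ : ContDiff ℝ 2 Φ) {x₀ : E} {t₀ : ℝ} (hstat : timeDeriv Φ (x₀, t₀) = 0)
    (hA : (fderiv ℝ (fun x => timeDeriv Φ (x, t₀)) x₀).IsInvertible) :
    ∃ z : ℝ → E, Tendsto z (𝓝 0) (𝓝 x₀) ∧ ∀ᶠ δ in 𝓝 0, Φ (z δ, t₀ + δ) = Φ (z δ, t₀) := by
  have hf := (contDiff_meanTimeDeriv hΦ t₀).hasStrictFDerivAt (x := (0, x₀)) one_ne_zero
  have hpartial : fderiv ℝ (meanTimeDeriv Φ t₀) (0, x₀) ∘L .inr ℝ ℝ E =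
      fderiv ℝ (fun x => timeDeriv Φ (x, t₀)) x₀ := by
    have := hf.hasFDerivAt.comp x₀ (hasFDerivAt_prodMk_right (0 : ℝ) x₀)
    simpa [Function.comp_def, meanTimeDeriv_zero_left] using this.fderiv.symm
  have hinv : (fderiv ℝ (meanTimeDeriv Φ t₀) (0, x₀) ∘L .inr ℝ ℝ E).IsInvertible := hpartial ▸ hA
  refine ⟨hf.implicitFunctionOfProdDomain hinv, hf.tendsto_implicitFunctionOfProdDomain hinv, ?_⟩
  filter_upwards [hf.eventually_apply_implicitFunctionOfProdDomain hinv] with δ hδ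
  have := smul_meanTimeDeriv (hΦ.of_le one_le_two) t₀ (δ, hf.implicitFunctionOfProdDomain hinv δ)
  rw [hδ, meanTimeDeriv_zero_left, hstat, smul_zero] at this
  exact sub_eq_zero.1 this.symm

/-- **Loops near stationary points of a C² action.**
Let `Φ : ℝⁿ × ℝ → ℝⁿ` be `C²`.  If `∂Φ/∂t (x₀, t₀) = 0` and the mixed partial
derivative `∂²Φ/∂x∂t (x₀, t₀)` (the derivative in `x` at `x₀` of
`x ↦ ∂Φ/∂t (x, t₀)`) is non-singular, then for every `ε > 0` there is a loop
`Φ (z₀, τ₀) = Φ (z₀, τ₀ + δ)`, `δ > 0`, staying `ε`-close to `Φ (x₀, t₀)`. -/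
theorem loops_near_stationary_points
    (n : ℕ) (Φ : EuclideanSpace ℝ (Fin n) × ℝ → EuclideanSpace ℝ (Fin n))
    (hΦ : ContDiff ℝ 2 Φ)
    (x₀ : EuclideanSpace ℝ (Fin n)) (t₀ : ℝ)
    (hstat : deriv (fun s => Φ (x₀, s)) t₀ = 0)
    (hns : Function.Bijective
      ⇑(fderiv ℝ (fun x => deriv (fun s => Φ (x, s)) t₀) x₀)) :
    ∀ ε > 0, ∃ (z₀ : EuclideanSpace ℝ (Fin n)) (τ₀ δ : ℝ), 0 < δ ∧
      Φ (z₀, τ₀) = Φ (z₀, τ₀ + δ) ∧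
      ∀ t, τ₀ ≤ t → t < τ₀ + δ → ‖Φ (z₀, t) - Φ (x₀, t₀)‖ < ε := by
  intro ε hε
  have hderiv (x t) : deriv (fun s => Φ (x, s)) t = timeDeriv Φ (x, t) :=
    (hasDerivAt_timeDeriv (hΦ.differentiable two_ne_zero _)).deriv
  simp only [hderiv] at hstat hns
  obtain ⟨z, hz, hloop⟩ := exists_loops_tendsto hΦ hstat
    (ContinuousLinearMap.isInvertible_of_bijective hns)
  obtain ⟨r, hr, hΦr⟩ := Metric.continuousAt_iff.1 hΦ.continuous.continuousAt ε hε
  have hsmall : ∀ᶠ δ in 𝓝 0, Φ (z δ, t₀ + δ) = Φ (z δ, t₀) ∧ dist (z δ) x₀ < r ∧ δ < r :=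
    hloop.and ((hz.eventually (Metric.ball_mem_nhds x₀ hr)).and (eventually_lt_nhds hr))
  obtain ⟨δ, ⟨hδloop, hzδ, hδr⟩, hδ⟩ :=
    ((hsmall.filter_mono nhdsWithin_le_nhds).and (self_mem_nhdsWithin (s := Ioi 0))).exists
  refine ⟨z δ, t₀, δ, hδ, hδloop.symm, fun t ht₁ ht₂ => ?_⟩
  rw [← dist_eq_norm]
  refine hΦr (max_lt hzδ ?_)
  rw [Real.dist_eq, abs_lt]
  constructor <;> linarith
end

section
/- Let Φ : ℝⁿ × ℝ → ℝⁿ be a C² map and let t₀ ∈ ℝ. Define G : ℝⁿ × ℝ → ℝⁿ by G(x, δ) = (1/(2δ))·(Φ(x, t₀ + δ) − Φ(x, t₀ − δ)) for δ ≠ 0, and G(x, 0) = ∂Φ/∂t(x, t₀). Then G is continuously differentiable (C¹) on ℝⁿ × ℝ, and for every x₀ ∈ ℝⁿ the partial derivative of G in x at (x₀, 0) equals the mixed partial derivative ∂²Φ/∂x∂t(x₀, t₀) (the derivative in x at x₀ of the map x ↦ ∂Φ/∂t(x, t₀)). -/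
/-!
Writing `∂ₜΦ` for the time partial derivative, the fundamental theorem of calculus and the
substitution `t = t₀ + δ s` give, for every `δ` (including `δ = 0`),
`G (x, δ) = ½ ∫_{-1}^{1} ∂ₜΦ (x, t₀ + δ s) ds`.
The integrand is a `C¹` function of `((x, δ), s)` because `Φ` is `C²`, so `G` is `C¹` by
differentiation under the integral sign, the dominating bound coming from compactness of `[-1, 1]`.
-/

open Topology Set

theorem Continuous.exists_eventually_forall_norm_le {X Y F : Type*} [TopologicalSpace X]
    [TopologicalSpace Y] [SeminormedAddGroup F] {f : X × Y → F} (hf : Continuous f)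
    {K : Set Y} (hK : IsCompact K) (x₀ : X) : ∃ C, ∀ᶠ x in 𝓝 x₀, ∀ y ∈ K, ‖f (x, y)‖ ≤ C := by
  obtain ⟨C, hC⟩ := hK.exists_bound_of_continuousOn
    (hf.comp (Continuous.prodMk_right x₀)).continuousOn
  refine ⟨C + 1, hK.eventually_forall_of_forall_eventually fun y hy => ?_⟩
  have hlt : ‖f (x₀, y)‖ < C + 1 := (hC y hy).trans_lt (lt_add_one C)
  exact (hf.norm.continuousAt.eventually (gt_mem_nhds hlt)).mono fun _ hz => hz.le

section

variable {E F : Type*} [NormedAddCommGroup E] [NormedSpace ℝ E]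
  [NormedAddCommGroup F] [NormedSpace ℝ F]

theorem hasFDerivAt_intervalIntegral_of_contDiff {g : E × ℝ → F} (hg : ContDiff ℝ 1 g)
    (a b : ℝ) (x₀ : E) :
    HasFDerivAt (fun x => ∫ s in a..b, g (x, s))
      (∫ s in a..b, (fderiv ℝ g (x₀, s)).comp (.inl ℝ E ℝ)) x₀ := by
  set g' : E × ℝ → E →L[ℝ] F := fun p => (fderiv ℝ g p).comp (.inl ℝ E ℝ)
  have hg'_cont : Continuous g' := (hg.continuous_fderiv one_ne_zero).clm_comp continuous_const
  obtain ⟨C, hC⟩ := hg'_cont.exists_eventually_forall_norm_le isCompact_uIcc x₀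
  refine intervalIntegral.hasFDerivAt_integral_of_dominated_of_fderiv_le
    (F' := fun x s => g' (x, s)) (bound := fun _ => C) hC ?_ ?_ ?_ ?_
    intervalIntegrable_const ?_
  · exact .of_forall fun x => (hg.continuous.comp (.prodMk_right x)).aestronglyMeasurable
  · exact (hg.continuous.comp (.prodMk_right x₀)).intervalIntegrable a b
  · exact (hg'_cont.comp (.prodMk_right x₀)).aestronglyMeasurable
  · exact .of_forall fun s hs x hx => hx s (uIoc_subset_uIcc hs)
  · exact .of_forall fun s _ x _ =>
      (hg.differentiable one_ne_zero (x, s)).hasFDerivAt.comp x (hasFDerivAt_prodMk_left x s)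

theorem contDiff_one_intervalIntegral_of_contDiff {g : E × ℝ → F} (hg : ContDiff ℝ 1 g)
    (a b : ℝ) : ContDiff ℝ 1 fun x => ∫ s in a..b, g (x, s) := by
  have hderiv := hasFDerivAt_intervalIntegral_of_contDiff hg a b
  rw [contDiff_one_iff_fderiv]
  refine ⟨fun x => (hderiv x).differentiableAt, ?_⟩
  rw [funext fun x => (hderiv x).fderiv]
  exact intervalIntegral.continuous_parametric_intervalIntegral_of_continuous'
    (f := fun x s => (fderiv ℝ g (x, s)).comp (.inl ℝ E ℝ))
    ((hg.continuous_fderiv one_ne_zero).clm_comp continuous_const) a b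

theorem HasFDerivAt.hasDerivAt_prodMk_right {Φ : E × ℝ → F} {L : E × ℝ →L[ℝ] F} {x : E}
    {t : ℝ} (hΦ : HasFDerivAt Φ L (x, t)) : HasDerivAt (fun s => Φ (x, s)) (L (0, 1)) t :=
  hΦ.comp_hasDerivAt t ((hasDerivAt_const t x).prodMk (hasDerivAt_id t))

variable [CompleteSpace F]

theorem sub_eq_smul_integral_comp_add_mul {f f' : ℝ → F} (hf : ∀ t, HasDerivAt f (f' t) t)
    (hf' : Continuous f') (t δ : ℝ) :
    f (t + δ) - f (t - δ) = δ • ∫ s in (-1 : ℝ)..1, f' (t + δ * s) := by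
  rw [intervalIntegral.smul_integral_comp_add_mul,
    intervalIntegral.integral_eq_sub_of_hasDerivAt (fun s _ => hf s) (hf'.intervalIntegrable _ _)]
  ring_nf

theorem symmetric_difference_quotient_eq_average {Φ : E × ℝ → F} (hΦ : ContDiff ℝ 1 Φ)
    (t₀ : ℝ) {G : E × ℝ → F} (hG0 : ∀ x, G (x, 0) = deriv (fun s => Φ (x, s)) t₀)
    (hGδ : ∀ x (δ : ℝ), δ ≠ 0 → G (x, δ) = (1 / (2 * δ)) • (Φ (x, t₀ + δ) - Φ (x, t₀ - δ))) :
    G = fun p => (2⁻¹ : ℝ) • ∫ s in (-1 : ℝ)..1, fderiv ℝ Φ (p.1, t₀ + p.2 * s) (0, 1) := by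
  have hslice : ∀ x t, HasDerivAt (fun s => Φ (x, s)) (fderiv ℝ Φ (x, t) (0, 1)) t := fun x t =>
    (hΦ.differentiable one_ne_zero (x, t)).hasFDerivAt.hasDerivAt_prodMk_right
  funext ⟨x, δ⟩
  rcases eq_or_ne δ 0 with rfl | hδ
  · simp only [hG0, (hslice x t₀).deriv, zero_mul, add_zero, intervalIntegral.integral_const]
    rw [smul_smul]
    norm_num
  · have hcont : Continuous fun t => fderiv ℝ Φ (x, t) (0, 1) :=
      ((hΦ.continuous_fderiv one_ne_zero).comp (.prodMk_right x)).clm_apply continuous_const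
    rw [hGδ x δ hδ, sub_eq_smul_integral_comp_add_mul (hslice x) hcont, smul_smul]
    simp only [mul_comm δ]
    congr 1
    field_simp

end

/-- **The symmetric difference quotient is `C¹`.**
For `Φ : ℝⁿ × ℝ → ℝⁿ` of class `C²` and `G (x, δ) = (Φ (x, t₀+δ) - Φ (x, t₀-δ))/(2δ)`
for `δ ≠ 0`, `G (x, 0) = ∂Φ/∂t (x, t₀)`, the map `G` is `C¹`, and its partial
derivative in `x` at `(x₀, 0)` equals the mixed partial `∂²Φ/∂x∂t (x₀, t₀)`. -/
theorem symmetric_difference_quotient_contDiff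
    (n : ℕ) (Φ : EuclideanSpace ℝ (Fin n) × ℝ → EuclideanSpace ℝ (Fin n))
    (hΦ : ContDiff ℝ 2 Φ) (t₀ : ℝ)
    (G : EuclideanSpace ℝ (Fin n) × ℝ → EuclideanSpace ℝ (Fin n))
    (hG0 : ∀ x, G (x, 0) = deriv (fun s => Φ (x, s)) t₀)
    (hGδ : ∀ x (δ : ℝ), δ ≠ 0 →
      G (x, δ) = (1 / (2 * δ)) • (Φ (x, t₀ + δ) - Φ (x, t₀ - δ))) :
    ContDiff ℝ 1 G ∧
    ∀ x₀, fderiv ℝ (fun x => G (x, 0)) x₀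
        = fderiv ℝ (fun x => deriv (fun s => Φ (x, s)) t₀) x₀ := by
  refine ⟨?_, fun x₀ => by simp only [hG0]⟩
  rw [symmetric_difference_quotient_eq_average (hΦ.of_le (by norm_num)) t₀ hG0 hGδ]
  have htime_deriv : ContDiff ℝ 1 fun p => fderiv ℝ Φ p (0, 1) :=
    (hΦ.fderiv_right (m := 1) (by norm_num)).clm_apply contDiff_const
  have hintegrand : ContDiff ℝ 1 fun q : (EuclideanSpace ℝ (Fin n) × ℝ) × ℝ =>
      fderiv ℝ Φ (q.1.1, t₀ + q.1.2 * q.2) (0, 1) :=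
    htime_deriv.comp (by fun_prop)
  exact (contDiff_one_intervalIntegral_of_contDiff hintegrand _ _).const_smul _
end

section
/- Let f₁, f₂ : ℝⁿ → ℝⁿ be C² vector fields (the paper states C¹, but C² is used so that the induced action is C²). Let x₀ ∈ ℝⁿ be a stasis point witnessed by constants k₁, k₂ > 0 with k₁·f₁(x₀) + k₂·f₂(x₀) = 0, and suppose the total derivative of the map x ↦ k₁·f₁(x) + k₂·f₂(x) at x₀ is a non-singular linear map ℝⁿ → ℝⁿ. Then for every ε > 0 there exists a two-cycle for the inclusion x′ ∈ {f₁(x), f₂(x)} contained in the ε-ball around x₀: there exist real numbers 0 < κ < δ and a continuous function x : ℝ → ℝⁿ with x(t) = x(t + δ) for all t, such that x′(t) = f₁(x(t)) for t ∈ (0, κ), x′(t) = f₂(x(t)) for t ∈ (κ, δ) (with matching one-sided derivatives at the switching times), and ‖x(t) − x₀‖ < ε for all t. -/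
/-!
Cut `f₁, f₂` off outside a ball, so that they become globally bounded with globally Lipschitz
derivatives and have global flows `Φ¹, Φ²`, and write `G = k₁ f₁ + k₂ f₂`. For a small time scale
`u`, the two-step map `P = Φ²_{k₂u} ∘ Φ¹_{k₁u}` agrees with the Euler step `p ↦ p + u G p` up to
an error that is `O(u²)` and `O(u²)`-Lipschitz (mean value inequality plus Grönwall). Hence
`u⁻¹ (P - id)` is a `C⁰`-small perturbation of `G` with small Lipschitz defect, and the
non-degenerate zero `x₀` of `G` persists as a zero `y` of it, i.e. a fixed point of `P`. Following
`Φ¹` for time `k₁u` and then `Φ²` for time `k₂u` from `y`, and extending periodically, gives the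
two-cycle.
-/

open Set Metric Function Filter
open scoped NNReal Topology

variable {E : Type*} [NormedAddCommGroup E] [NormedSpace ℝ E]

structure C11BoundedWith (L : ℝ≥0) (F : E → E) : Prop where
  differentiable : Differentiable ℝ F
  norm_le : ∀ x, ‖F x‖ ≤ L
  lipschitzWith : LipschitzWith L F
  lipschitzWith_fderiv : LipschitzWith L (fderiv ℝ F)

theorem C11BoundedWith.mono {L L' : ℝ≥0} {F : E → E} (hF : C11BoundedWith L F) (h : L ≤ L') :
    C11BoundedWith L' F :=
  ⟨hF.differentiable, fun x => (hF.norm_le x).trans (by exact_mod_cast h),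
    hF.lipschitzWith.weaken h, hF.lipschitzWith_fderiv.weaken h⟩

theorem HasCompactSupport.exists_c11BoundedWith {F : E → E} (hs : HasCompactSupport F)
    (hF : ContDiff ℝ 2 F) : ∃ L, C11BoundedWith L F := by
  obtain ⟨M, hM⟩ := hs.exists_bound_of_continuous hF.continuous
  obtain ⟨K, hK⟩ := hF.lipschitzWith_of_hasCompactSupport hs (by norm_num)
  obtain ⟨K', hK'⟩ := (hF.fderiv_right (m := 1) (by norm_num)).lipschitzWith_of_hasCompactSupport
    (hs.fderiv ℝ) (by norm_num)
  refine ⟨max M.toNNReal (max K K'), hF.differentiable (by norm_num), fun x => ?_,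
    hK.weaken (le_max_of_le_right (le_max_left _ _)),
    hK'.weaken (le_max_of_le_right (le_max_right _ _))⟩
  exact (hM x).trans ((Real.le_coe_toNNReal M).trans (by exact_mod_cast le_max_left _ _))

theorem ContDiff.exists_c11BoundedWith_eqOn [FiniteDimensional ℝ E] {f : E → E}
    (hf : ContDiff ℝ 2 f) (x₀ : E) {r : ℝ} (hr : 0 < r) :
    ∃ F L, C11BoundedWith L F ∧ EqOn F f (closedBall x₀ r) := by
  let χ : ContDiffBump x₀ := ⟨r, 2 * r, hr, by linarith⟩
  obtain ⟨L, hL⟩ := (χ.hasCompactSupport.smul_right (f' := f)).exists_c11BoundedWith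
    (χ.contDiff.smul hf)
  exact ⟨_, L, hL, fun x hx => by simp [χ.one_of_mem_closedBall hx]⟩

theorem norm_sub_sub_sub_le_of_lipschitzWith_fderiv {F : E → E} {K K' : ℝ≥0}
    (hF : Differentiable ℝ F) (hK : LipschitzWith K F) (hK' : LipschitzWith K' (fderiv ℝ F))
    (a b c d : E) :
    ‖F a - F b - (F c - F d)‖ ≤ K * ‖a - b - (c - d)‖ + K' * max ‖a - c‖ ‖b - d‖ * ‖c - d‖ := by
  set β : ℝ → E := fun s => b + s • (a - b)
  set δ : ℝ → E := fun s => d + s • (c - d)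
  have hderiv : ∀ s ∈ Icc (0 : ℝ) 1, HasDerivWithinAt (fun s => F (β s) - F (δ s))
      (fderiv ℝ F (β s) (a - b) - fderiv ℝ F (δ s) (c - d)) (Icc 0 1) s := by
    intro s _
    have hβ : HasDerivAt β (a - b) s := by simpa [β] using (hasDerivAt_id s).smul_const (a - b)
    have hδ : HasDerivAt δ (c - d) s := by simpa [δ] using (hasDerivAt_id s).smul_const (c - d)
    exact (((hF _).hasFDerivAt.comp_hasDerivAt s hβ).sub
      ((hF _).hasFDerivAt.comp_hasDerivAt s hδ)).hasDerivWithinAt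
  have hbound : ∀ s ∈ Ico (0 : ℝ) 1,
      ‖fderiv ℝ F (β s) (a - b) - fderiv ℝ F (δ s) (c - d)‖ ≤
        K * ‖a - b - (c - d)‖ + K' * max ‖a - c‖ ‖b - d‖ * ‖c - d‖ := by
    intro s hs
    have hβδ : ‖β s - δ s‖ ≤ max ‖a - c‖ ‖b - d‖ := by
      have hcomb : β s - δ s = (1 - s) • (b - d) + s • (a - c) := by simp only [β, δ]; module
      rw [hcomb, ← mem_closedBall_zero_iff]
      exact convex_closedBall _ _ (mem_closedBall_zero_iff.2 (le_max_right _ _))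
        (mem_closedBall_zero_iff.2 (le_max_left _ _)) (by linarith [hs.2]) hs.1 (by ring)
    calc ‖fderiv ℝ F (β s) (a - b) - fderiv ℝ F (δ s) (c - d)‖
        = ‖fderiv ℝ F (β s) (a - b - (c - d)) + (fderiv ℝ F (β s) - fderiv ℝ F (δ s)) (c - d)‖ := by
          simp only [map_sub, sub_apply]; abel_nf
      _ ≤ ‖fderiv ℝ F (β s)‖ * ‖a - b - (c - d)‖ +
          ‖fderiv ℝ F (β s) - fderiv ℝ F (δ s)‖ * ‖c - d‖ :=
          norm_add_le_of_le (ContinuousLinearMap.le_opNorm _ _) (ContinuousLinearMap.le_opNorm _ _)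
      _ ≤ K * ‖a - b - (c - d)‖ + K' * max ‖a - c‖ ‖b - d‖ * ‖c - d‖ := by
          gcongr
          · exact norm_fderiv_le_of_lipschitz ℝ hK
          · exact (hK'.norm_sub_le _ _).trans (by gcongr)
  have hmvt := norm_image_sub_le_of_norm_deriv_le_segment_01' hderiv hbound
  have hends : F (β 1) - F (δ 1) - (F (β 0) - F (δ 0)) = F a - F b - (F c - F d) := by
    simp only [β, δ]; simp only [one_smul, zero_smul, add_zero, add_sub_cancel]; abel
  rwa [hends] at hmvt

theorem HasStrictFDerivAt.exists_zero_of_lipschitzOnWith_sub {F' : Type*} [NormedAddCommGroup F']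
    [NormedSpace ℝ F'] [CompleteSpace E] [CompleteSpace F'] {G : E → F'} {A : E →L[ℝ] F'} {x₀ : E}
    (hG : HasStrictFDerivAt G A x₀) (hA : Surjective A) (hG0 : G x₀ = 0) {ρ : ℝ}
    (hρ : 0 < ρ) :
    ∃ η : ℝ≥0, 0 < η ∧ ∀ H : E → F', ‖H x₀ - G x₀‖ ≤ η →
      LipschitzOnWith η (H - G) (closedBall x₀ ρ) → ∃ y ∈ closedBall x₀ ρ, H y = 0 := by
  set A' := A.nonlinearRightInverseOfSurjective (LinearMap.range_eq_top.2 hA)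
  have hN := A.nonlinearRightInverseOfSurjective_nnnorm_pos (LinearMap.range_eq_top.2 hA)
  set c : ℝ≥0 := A'.nnnorm⁻¹ / 4
  have hc : 0 < c := by positivity
  obtain ⟨s, hs, hGs⟩ := hG.approximates_deriv_on_nhds (Or.inr hc)
  obtain ⟨r, hr, hrs⟩ := nhds_basis_closedBall.mem_iff.1 hs
  set r' : ℝ≥0 := ⟨min r ρ, le_min hr.le hρ.le⟩
  have hr' : 0 < r' := lt_min hr hρ
  refine ⟨min c (2 * c * r'), lt_min hc (by positivity), fun H hH0 hH => ?_⟩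
  set η := min c (2 * c * r')
  have hHA : ApproximatesLinearOn H A (closedBall x₀ r') (c + η) := by
    rw [ApproximatesLinearOn.approximatesLinearOn_iff_lipschitzOnWith] at hGs ⊢
    rw [show H - ⇑A = (G - ⇑A) + (H - G) by abel]
    exact (hGs.mono ((closedBall_subset_closedBall (min_le_left _ _)).trans hrs)).add
      (hH.mono (closedBall_subset_closedBall (min_le_right _ _)))
  have h0 : (0 : F') ∈ closedBall (H x₀) (((A'.nnnorm : ℝ)⁻¹ - (c + η : ℝ≥0)) * r') := by
    rw [mem_closedBall, dist_comm, dist_zero_right]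
    rw [hG0, sub_zero] at hH0
    have hc4 : (A'.nnnorm : ℝ)⁻¹ = 4 * c := by simp [c]; ring
    have hη₁ : (η : ℝ) ≤ c := by exact_mod_cast min_le_left _ _
    have hη₂ : (η : ℝ) ≤ 2 * c * r' := by exact_mod_cast min_le_right _ _
    rw [hc4, NNReal.coe_add]
    nlinarith [mul_nonneg (sub_nonneg.2 hη₁) (NNReal.coe_nonneg r')]
  obtain ⟨y, hy, hHy⟩ :=
    hHA.surjOn_closedBall_of_nonlinearRightInverse A' r'.coe_nonneg subset_rfl h0
  exact ⟨y, closedBall_subset_closedBall (min_le_right _ _) hy, hHy⟩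

section IntegralCurve

variable {F : E → E} {K : ℝ≥0} {M T : ℝ} {γ η : ℝ → E}

theorem exists_isIntegralCurveOn_Icc_of_lipschitzWith [CompleteSpace E] (hK : LipschitzWith K F)
    (hM : ∀ x, ‖F x‖ ≤ M) (hT : 0 ≤ T) (p : E) :
    ∃ γ : ℝ → E, γ 0 = p ∧ IsIntegralCurveOn γ (fun _ => F) (Icc 0 T) := by
  have hM0 : 0 ≤ M := (norm_nonneg _).trans (hM p)
  have hPL : IsPicardLindelof (fun _ => F) (tmin := 0) (tmax := T) ⟨0, left_mem_Icc.2 hT⟩ p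
      ⟨M * T, by positivity⟩ 0 ⟨M, hM0⟩ K :=
    { lipschitzOnWith := fun _ _ => hK.lipschitzOnWith
      continuousOn := fun _ _ => continuousOn_const
      norm_le := fun _ _ x _ => hM x
      mul_max_le := by simp [max_eq_left hT]; rfl }
  exact hPL.exists_eq_forall_mem_Icc_hasDerivWithinAt₀

theorem IsIntegralCurveOn.norm_sub_le (hγ : IsIntegralCurveOn γ (fun _ => F) (Icc 0 T))
    (hM : ∀ x, ‖F x‖ ≤ M) : ∀ t ∈ Icc 0 T, ‖γ t - γ 0‖ ≤ M * t := by
  simpa using norm_image_sub_le_of_norm_deriv_le_segment' hγ (fun t _ => hM (γ t))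

theorem IsIntegralCurveOn.norm_sub_sub_smul_le (hγ : IsIntegralCurveOn γ (fun _ => F) (Icc 0 T))
    (hM : ∀ x, ‖F x‖ ≤ M) (hK : LipschitzWith K F) (hT : 0 ≤ T) :
    ‖γ T - γ 0 - T • F (γ 0)‖ ≤ K * M * T ^ 2 := by
  have hM0 : 0 ≤ M := (norm_nonneg _).trans (hM 0)
  have hderiv : ∀ t ∈ Icc 0 T, HasDerivWithinAt (fun t => γ t - t • F (γ 0))
      (F (γ t) - F (γ 0)) (Icc 0 T) t := fun t ht => by
    convert (hγ t ht).sub ((hasDerivWithinAt_id t _).smul_const (F (γ 0))) using 1 <;>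
      simp [Pi.sub_def]
  have hbound : ∀ t ∈ Ico 0 T, ‖F (γ t) - F (γ 0)‖ ≤ K * M * T := fun t ht =>
    calc ‖F (γ t) - F (γ 0)‖ ≤ K * ‖γ t - γ 0‖ := hK.norm_sub_le _ _
      _ ≤ K * (M * T) := by
        gcongr
        exact (hγ.norm_sub_le hM t (Ico_subset_Icc_self ht)).trans (by gcongr; exact ht.2.le)
      _ = K * M * T := by ring
  have := norm_image_sub_le_of_norm_deriv_le_segment' hderiv hbound T ⟨hT, le_rfl⟩
  simp only [zero_smul, sub_zero] at this
  calc ‖γ T - γ 0 - T • F (γ 0)‖ = ‖γ T - T • F (γ 0) - γ 0‖ := by rw [sub_right_comm]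
    _ ≤ K * M * T * T := this
    _ = K * M * T ^ 2 := by ring

theorem IsIntegralCurveOn.norm_sub_le_two_mul (hγ : IsIntegralCurveOn γ (fun _ => F) (Icc 0 T))
    (hη : IsIntegralCurveOn η (fun _ => F) (Icc 0 T)) (hK : LipschitzWith K F)
    (hKT : K * T ≤ 1 / 2) : ∀ t ∈ Icc 0 T, ‖γ t - η t‖ ≤ 2 * ‖γ 0 - η 0‖ := by
  intro t ht
  have hright : ∀ {ζ : ℝ → E}, IsIntegralCurveOn ζ (fun _ => F) (Icc 0 T) →
      ∀ s ∈ Ico 0 T, HasDerivWithinAt ζ (F (ζ s)) (Ici s) s := fun hζ s hs =>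
    (hζ s (Ico_subset_Icc_self hs)).mono_of_mem_nhdsWithin (Icc_mem_nhdsGE_of_mem hs)
  have hgron := dist_le_of_trajectories_ODE (v := fun _ => F) (fun _ => hK) hγ.continuousOn
    (hright hγ) hη.continuousOn (hright hη) le_rfl t ht
  have hexp : Real.exp (K * (t - 0)) ≤ 2 := by
    have hKt : (K : ℝ) * (t - 0) ≤ 1 / 2 := by
      rw [sub_zero]; exact (mul_le_mul_of_nonneg_left ht.2 K.coe_nonneg).trans hKT
    calc Real.exp (K * (t - 0)) ≤ Real.exp (1 / 2) := Real.exp_le_exp.2 hKt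
      _ ≤ 1 / (1 - 1 / 2) := Real.exp_bound_div_one_sub_of_interval (by norm_num) (by norm_num)
      _ = 2 := by norm_num
  rw [dist_eq_norm, dist_eq_norm] at hgron
  nlinarith [norm_nonneg (γ 0 - η 0)]

theorem IsIntegralCurveOn.norm_sub_sub_sub_le (hγ : IsIntegralCurveOn γ (fun _ => F) (Icc 0 T))
    (hη : IsIntegralCurveOn η (fun _ => F) (Icc 0 T)) (hK : LipschitzWith K F)
    (hKT : K * T ≤ 1 / 2) :
    ∀ t ∈ Icc 0 T, ‖γ t - η t - (γ 0 - η 0)‖ ≤ 2 * K * ‖γ 0 - η 0‖ * t := by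
  have hderiv : ∀ t ∈ Icc 0 T, HasDerivWithinAt (fun t => γ t - η t)
      (F (γ t) - F (η t)) (Icc 0 T) t := fun t ht => (hγ t ht).sub (hη t ht)
  have hbound : ∀ t ∈ Ico 0 T, ‖F (γ t) - F (η t)‖ ≤ 2 * K * ‖γ 0 - η 0‖ := fun t ht =>
    calc ‖F (γ t) - F (η t)‖ ≤ K * ‖γ t - η t‖ := hK.norm_sub_le _ _
      _ ≤ K * (2 * ‖γ 0 - η 0‖) := by
        gcongr; exact hγ.norm_sub_le_two_mul hη hK hKT t (Ico_subset_Icc_self ht)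
      _ = 2 * K * ‖γ 0 - η 0‖ := by ring
  simpa using norm_image_sub_le_of_norm_deriv_le_segment' hderiv hbound

theorem IsIntegralCurveOn.norm_sub_sub_sub_sub_smul_le {L : ℝ≥0} (hF : C11BoundedWith L F)
    (hγ : IsIntegralCurveOn γ (fun _ => F) (Icc 0 T))
    (hη : IsIntegralCurveOn η (fun _ => F) (Icc 0 T)) (hLT : L * T ≤ 1 / 2) (hT : 0 ≤ T) :
    ‖γ T - η T - (γ 0 - η 0) - T • (F (γ 0) - F (η 0))‖ ≤ 3 * L ^ 2 * T ^ 2 * ‖γ 0 - η 0‖ := by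
  have hderiv : ∀ t ∈ Icc 0 T, HasDerivWithinAt (fun t => γ t - η t - t • (F (γ 0) - F (η 0)))
      (F (γ t) - F (η t) - (F (γ 0) - F (η 0))) (Icc 0 T) t := fun t ht => by
    convert ((hγ t ht).sub (hη t ht)).sub
      ((hasDerivWithinAt_id t _).smul_const (F (γ 0) - F (η 0))) using 1 <;> simp [Pi.sub_def]
  have hbound : ∀ t ∈ Ico 0 T, ‖F (γ t) - F (η t) - (F (γ 0) - F (η 0))‖ ≤
      3 * L ^ 2 * T * ‖γ 0 - η 0‖ := by
    intro t ht
    have ht' := Ico_subset_Icc_self ht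
    have hdiff := hγ.norm_sub_sub_sub_le hη hF.lipschitzWith hLT t ht'
    have hγt := hγ.norm_sub_le hF.norm_le t ht'
    have hηt := hη.norm_sub_le hF.norm_le t ht'
    calc ‖F (γ t) - F (η t) - (F (γ 0) - F (η 0))‖
        ≤ L * ‖γ t - η t - (γ 0 - η 0)‖ + L * max ‖γ t - γ 0‖ ‖η t - η 0‖ * ‖γ 0 - η 0‖ :=
          norm_sub_sub_sub_le_of_lipschitzWith_fderiv hF.differentiable hF.lipschitzWith
            hF.lipschitzWith_fderiv _ _ _ _
      _ ≤ L * (2 * L * ‖γ 0 - η 0‖ * t) + L * (L * t) * ‖γ 0 - η 0‖ := by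
          gcongr; exact max_le hγt hηt
      _ ≤ 3 * L ^ 2 * T * ‖γ 0 - η 0‖ := by
          have := ht.2.le
          nlinarith [norm_nonneg (γ 0 - η 0), L.coe_nonneg, sq_nonneg (L : ℝ),
            mul_nonneg (sq_nonneg (L : ℝ)) (norm_nonneg (γ 0 - η 0))]
  have := norm_image_sub_le_of_norm_deriv_le_segment' hderiv hbound T ⟨hT, le_rfl⟩
  simp only [zero_smul, sub_zero] at this
  calc ‖γ T - η T - (γ 0 - η 0) - T • (F (γ 0) - F (η 0))‖
      = ‖γ T - η T - T • (F (γ 0) - F (η 0)) - (γ 0 - η 0)‖ := by rw [sub_right_comm]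
    _ ≤ 3 * L ^ 2 * T * ‖γ 0 - η 0‖ * T := this
    _ = 3 * L ^ 2 * T ^ 2 * ‖γ 0 - η 0‖ := by ring

end IntegralCurve

section TwoStep

variable {F₁ F₂ : E → E} {L : ℝ≥0} {T₁ T₂ : ℝ} {Φ Ψ : E → ℝ → E}

theorem norm_twoStep_sub_sub_le (hF₁ : C11BoundedWith L F₁) (hF₂ : C11BoundedWith L F₂)
    (hΦ0 : ∀ p, Φ p 0 = p) (hΦ : ∀ p, IsIntegralCurveOn (Φ p) (fun _ => F₁) (Icc 0 T₁))
    (hΨ0 : ∀ p, Ψ p 0 = p) (hΨ : ∀ p, IsIntegralCurveOn (Ψ p) (fun _ => F₂) (Icc 0 T₂))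
    (hT₁ : 0 ≤ T₁) (hT₂ : 0 ≤ T₂) (p : E) :
    ‖Ψ (Φ p T₁) T₂ - p - (T₁ • F₁ p + T₂ • F₂ p)‖ ≤ L ^ 2 * (T₁ + T₂) ^ 2 := by
  set p' := Φ p T₁
  have h₁ := (hΦ p).norm_sub_sub_smul_le hF₁.norm_le hF₁.lipschitzWith hT₁
  have h₂ := (hΨ p').norm_sub_sub_smul_le hF₂.norm_le hF₂.lipschitzWith hT₂
  have hp' := (hΦ p).norm_sub_le hF₁.norm_le T₁ ⟨hT₁, le_rfl⟩
  rw [hΦ0] at h₁ hp'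
  rw [hΨ0] at h₂
  have h₃ : ‖T₂ • (F₂ p' - F₂ p)‖ ≤ T₂ * (L * (L * T₁)) := by
    rw [norm_smul, Real.norm_of_nonneg hT₂]
    gcongr
    exact (hF₂.lipschitzWith.norm_sub_le _ _).trans (by gcongr)
  calc ‖Ψ p' T₂ - p - (T₁ • F₁ p + T₂ • F₂ p)‖
      = ‖(Ψ p' T₂ - p' - T₂ • F₂ p') + (p' - p - T₁ • F₁ p) + T₂ • (F₂ p' - F₂ p)‖ := by
        rw [smul_sub]; congr 1; abel
    _ ≤ L * L * T₂ ^ 2 + L * L * T₁ ^ 2 + T₂ * (L * (L * T₁)) :=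
        norm_add₃_le.trans (by gcongr)
    _ ≤ L ^ 2 * (T₁ + T₂) ^ 2 := by
        nlinarith [mul_nonneg (sq_nonneg (L : ℝ)) (mul_nonneg hT₁ hT₂)]

theorem norm_twoStep_sub_sub_sub_le (hF₁ : C11BoundedWith L F₁) (hF₂ : C11BoundedWith L F₂)
    (hΦ0 : ∀ p, Φ p 0 = p) (hΦ : ∀ p, IsIntegralCurveOn (Φ p) (fun _ => F₁) (Icc 0 T₁))
    (hΨ0 : ∀ p, Ψ p 0 = p) (hΨ : ∀ p, IsIntegralCurveOn (Ψ p) (fun _ => F₂) (Icc 0 T₂))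
    (hT₁ : 0 ≤ T₁) (hT₂ : 0 ≤ T₂) (hLT : L * (T₁ + T₂) ≤ 1 / 2) (p q : E) :
    ‖(Ψ (Φ p T₁) T₂ - p - (T₁ • F₁ p + T₂ • F₂ p)) -
        (Ψ (Φ q T₁) T₂ - q - (T₁ • F₁ q + T₂ • F₂ q))‖ ≤ 6 * L ^ 2 * (T₁ + T₂) ^ 2 * ‖p - q‖ := by
  set p' := Φ p T₁
  set q' := Φ q T₁
  have hLT₁ : L * T₁ ≤ 1 / 2 := by nlinarith [L.coe_nonneg]
  have hLT₂ : L * T₂ ≤ 1 / 2 := by nlinarith [L.coe_nonneg]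
  have hT₁mem : T₁ ∈ Icc 0 T₁ := ⟨hT₁, le_rfl⟩
  have h₁ := (hΦ p).norm_sub_sub_sub_sub_smul_le hF₁ (hΦ q) hLT₁ hT₁
  have h₂ := (hΨ p').norm_sub_sub_sub_sub_smul_le hF₂ (hΨ q') hLT₂ hT₂
  have hpq' := (hΦ p).norm_sub_le_two_mul (hΦ q) hF₁.lipschitzWith hLT₁ T₁ hT₁mem
  have hd := (hΦ p).norm_sub_sub_sub_le (hΦ q) hF₁.lipschitzWith hLT₁ T₁ hT₁mem
  have hp' := (hΦ p).norm_sub_le hF₁.norm_le T₁ hT₁mem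
  have hq' := (hΦ q).norm_sub_le hF₁.norm_le T₁ hT₁mem
  rw [hΦ0, hΦ0] at h₁ hpq' hd
  rw [hΦ0] at hp' hq'
  rw [hΨ0, hΨ0] at h₂
  have h₃ : ‖T₂ • (F₂ p' - F₂ q' - (F₂ p - F₂ q))‖ ≤ T₂ * (3 * L ^ 2 * T₁ * ‖p - q‖) := by
    rw [norm_smul, Real.norm_of_nonneg hT₂]
    gcongr
    calc ‖F₂ p' - F₂ q' - (F₂ p - F₂ q)‖
        ≤ L * ‖p' - q' - (p - q)‖ + L * max ‖p' - p‖ ‖q' - q‖ * ‖p - q‖ :=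
          norm_sub_sub_sub_le_of_lipschitzWith_fderiv hF₂.differentiable hF₂.lipschitzWith
            hF₂.lipschitzWith_fderiv _ _ _ _
      _ ≤ L * (2 * L * ‖p - q‖ * T₁) + L * (L * T₁) * ‖p - q‖ := by
          gcongr; exact max_le hp' hq'
      _ = 3 * L ^ 2 * T₁ * ‖p - q‖ := by ring
  calc ‖(Ψ p' T₂ - p - (T₁ • F₁ p + T₂ • F₂ p)) - (Ψ q' T₂ - q - (T₁ • F₁ q + T₂ • F₂ q))‖
      = ‖(Ψ p' T₂ - Ψ q' T₂ - (p' - q') - T₂ • (F₂ p' - F₂ q'))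
          + (p' - q' - (p - q) - T₁ • (F₁ p - F₁ q))
          + T₂ • (F₂ p' - F₂ q' - (F₂ p - F₂ q))‖ := by
        congr 1; simp only [smul_sub]; abel
    _ ≤ 3 * L ^ 2 * T₂ ^ 2 * ‖p' - q'‖ + 3 * L ^ 2 * T₁ ^ 2 * ‖p - q‖
          + T₂ * (3 * L ^ 2 * T₁ * ‖p - q‖) :=
        norm_add₃_le.trans (by gcongr)
    _ ≤ 3 * L ^ 2 * T₂ ^ 2 * (2 * ‖p - q‖) + 3 * L ^ 2 * T₁ ^ 2 * ‖p - q‖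
          + T₂ * (3 * L ^ 2 * T₁ * ‖p - q‖) := by gcongr
    _ = 3 * L ^ 2 * ‖p - q‖ * (2 * T₂ ^ 2 + T₁ ^ 2 + T₁ * T₂) := by ring
    _ ≤ 3 * L ^ 2 * ‖p - q‖ * (2 * (T₁ + T₂) ^ 2) := by
        gcongr; nlinarith [mul_nonneg hT₁ hT₂]
    _ = 6 * L ^ 2 * (T₁ + T₂) ^ 2 * ‖p - q‖ := by ring

end TwoStep

theorem exists_periodic_of_concat {X : Type*} [TopologicalSpace X] {γ₁ γ₂ : ℝ → X} {T₁ T₂ : ℝ}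
    (hT₁ : 0 < T₁) (hT₂ : 0 < T₂) (h₁ : ContinuousOn γ₁ (Icc 0 T₁))
    (h₂ : ContinuousOn γ₂ (Icc 0 T₂)) (hjoin : γ₂ 0 = γ₁ T₁) (hclose : γ₂ T₂ = γ₁ 0) :
    ∃ x : ℝ → X, Continuous x ∧ Periodic x (T₁ + T₂) ∧ EqOn x γ₁ (Icc 0 T₁) ∧
      EqOn x (fun t => γ₂ (t - T₁)) (Icc T₁ (T₁ + T₂)) ∧
      range x ⊆ γ₁ '' Icc 0 T₁ ∪ γ₂ '' Icc 0 T₂ := by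
  have : Fact (0 < T₁ + T₂) := ⟨by linarith⟩
  set Y : ℝ → X := fun t => if t ≤ T₁ then γ₁ t else γ₂ (t - T₁)
  have hY₁ : EqOn Y γ₁ (Icc 0 T₁) := fun t ht => if_pos ht.2
  have hY₂ : EqOn Y (fun t => γ₂ (t - T₁)) (Icc T₁ (T₁ + T₂)) := by
    intro t ht
    rcases ht.1.eq_or_lt with rfl | hlt
    · simp [Y, hjoin]
    · exact if_neg hlt.not_ge
  have hshift : MapsTo (fun t => t - T₁) (Icc T₁ (T₁ + T₂)) (Icc 0 T₂) :=
    fun t ht => ⟨by linarith [ht.1], by linarith [ht.2]⟩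
  have hYc : ContinuousOn Y (Icc 0 (T₁ + T₂)) := by
    rw [← Icc_union_Icc_eq_Icc hT₁.le (by linarith)]
    exact ContinuousOn.union_of_isClosed (h₁.congr hY₁)
      ((h₂.comp (continuous_sub_right T₁).continuousOn hshift).congr hY₂) isClosed_Icc isClosed_Icc
  have hYper : Y 0 = Y (T₁ + T₂) := by
    rw [hY₁ ⟨le_rfl, hT₁.le⟩, hY₂ ⟨by linarith, le_rfl⟩]
    simp [hclose]
  set x : ℝ → X := fun t => AddCircle.liftIco (T₁ + T₂) 0 Y t
  have hxper : Periodic x (T₁ + T₂) := fun t => by simp only [x, AddCircle.coe_add_period]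
  have hxY : EqOn x Y (Icc 0 (T₁ + T₂)) := by
    intro t ht
    rcases ht.2.eq_or_lt with rfl | hlt
    · rw [← zero_add (T₁ + T₂), hxper 0, zero_add, ← hYper]
      exact AddCircle.liftIco_zero_coe_apply ⟨le_rfl, by linarith⟩
    · exact AddCircle.liftIco_zero_coe_apply ⟨ht.1, hlt⟩
  refine ⟨x, (AddCircle.liftIco_zero_continuous hYper hYc).comp (AddCircle.continuous_mk' _),
    hxper, fun t ht => (hxY ⟨ht.1, by linarith [ht.2]⟩).trans (hY₁ ht),
    fun t ht => (hxY ⟨by linarith [ht.1], ht.2⟩).trans (hY₂ ht), ?_⟩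
  rintro _ ⟨t, rfl⟩
  obtain ⟨s, hs, hts⟩ := hxper.exists_mem_Ico₀ (by linarith) t
  rw [hts, hxY (Ico_subset_Icc_self hs)]
  by_cases hsT : s ≤ T₁
  · exact Or.inl ⟨s, ⟨hs.1, hsT⟩, (hY₁ ⟨hs.1, hsT⟩).symm⟩
  · have hs' : s ∈ Icc T₁ (T₁ + T₂) := ⟨(not_le.1 hsT).le, hs.2.le⟩
    exact Or.inr ⟨s - T₁, hshift hs', (hY₂ hs').symm⟩

theorem exists_periodic_isIntegralCurveOn_of_concat {F₁ F₂ : E → E} {γ₁ γ₂ : ℝ → E} {T₁ T₂ : ℝ}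
    (hT₁ : 0 < T₁) (hT₂ : 0 < T₂) (hγ₁ : IsIntegralCurveOn γ₁ (fun _ => F₁) (Icc 0 T₁))
    (hγ₂ : IsIntegralCurveOn γ₂ (fun _ => F₂) (Icc 0 T₂)) (hjoin : γ₂ 0 = γ₁ T₁)
    (hclose : γ₂ T₂ = γ₁ 0) :
    ∃ x : ℝ → E, Continuous x ∧ Periodic x (T₁ + T₂) ∧
      IsIntegralCurveOn x (fun _ => F₁) (Icc 0 T₁) ∧
      IsIntegralCurveOn x (fun _ => F₂) (Icc T₁ (T₁ + T₂)) ∧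
      range x ⊆ γ₁ '' Icc 0 T₁ ∪ γ₂ '' Icc 0 T₂ := by
  obtain ⟨x, hxc, hxper, hx₁, hx₂, hxrange⟩ :=
    exists_periodic_of_concat hT₁ hT₂ hγ₁.continuousOn hγ₂.continuousOn hjoin hclose
  have hγ₂' : IsIntegralCurveOn (fun t => γ₂ (t - T₁)) (fun _ => F₂) (Icc T₁ (T₁ + T₂)) := by
    simpa [Function.comp_def] using hγ₂.comp_sub T₁
  exact ⟨x, hxc, hxper, fun t ht => (hx₁ ht ▸ hγ₁ t ht).congr hx₁ (hx₁ ht),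
    fun t ht => (hx₂ ht ▸ hγ₂' t ht).congr hx₂ (hx₂ ht), hxrange⟩

theorem IsIntegralCurveOn.mapsTo_closedBall {F : E → E} {γ : ℝ → E} {M T : ℝ}
    (hγ : IsIntegralCurveOn γ (fun _ => F) (Icc 0 T)) (hM : ∀ x, ‖F x‖ ≤ M) :
    MapsTo γ (Icc 0 T) (closedBall (γ 0) (M * T)) := fun t ht => by
  have hM0 : 0 ≤ M := (norm_nonneg _).trans (hM 0)
  rw [mem_closedBall_iff_norm]
  exact (hγ.norm_sub_le hM t ht).trans (by gcongr; exact ht.2)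

theorem eventually_const_mul_lt (c : ℝ) {b : ℝ} (hb : 0 < b) :
    ∀ᶠ u in 𝓝[>] (0 : ℝ), c * u < b :=
  (((continuous_const_mul c).tendsto' 0 0 (mul_zero c)).mono_left nhdsWithin_le_nhds).eventually
    (gt_mem_nhds hb)

theorem eventually_exists_twoStep_fixedPoint [CompleteSpace E] {F₁ F₂ : E → E} {L : ℝ≥0}
    (hF₁ : C11BoundedWith L F₁) (hF₂ : C11BoundedWith L F₂) {k₁ k₂ : ℝ} (hk₁ : 0 ≤ k₁)
    (hk₂ : 0 ≤ k₂) {x₀ : E} {A : E →L[ℝ] E}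
    (hG : HasStrictFDerivAt (fun x => k₁ • F₁ x + k₂ • F₂ x) A x₀) (hA : Surjective A)
    (hG0 : k₁ • F₁ x₀ + k₂ • F₂ x₀ = 0) {ρ : ℝ} (hρ : 0 < ρ) :
    ∀ᶠ u in 𝓝[>] 0, ∀ Φ Ψ : E → ℝ → E, (∀ p, Φ p 0 = p) →
      (∀ p, IsIntegralCurveOn (Φ p) (fun _ => F₁) (Icc 0 (k₁ * u))) → (∀ p, Ψ p 0 = p) →
      (∀ p, IsIntegralCurveOn (Ψ p) (fun _ => F₂) (Icc 0 (k₂ * u))) →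
      ∃ y ∈ closedBall x₀ ρ, Ψ (Φ y (k₁ * u)) (k₂ * u) = y := by
  obtain ⟨η, hη, hzero⟩ := hG.exists_zero_of_lipschitzOnWith_sub hA hG0 hρ
  filter_upwards [eventually_mem_nhdsWithin,
    eventually_const_mul_lt (6 * L ^ 2 * (k₁ + k₂) ^ 2) (NNReal.coe_pos.2 hη),
    eventually_const_mul_lt (L * (k₁ + k₂)) one_half_pos] with u hu huη hu₁ Φ Ψ hΦ0 hΦ hΨ0 hΨ
  rw [mem_Ioi] at hu
  have hT₁ : 0 ≤ k₁ * u := mul_nonneg hk₁ hu.le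
  have hT₂ : 0 ≤ k₂ * u := mul_nonneg hk₂ hu.le
  have hT : k₁ * u + k₂ * u = (k₁ + k₂) * u := by ring
  set H : E → E := fun p => u⁻¹ • (Ψ (Φ p (k₁ * u)) (k₂ * u) - p)
  have hHG : ∀ p, H p - (k₁ • F₁ p + k₂ • F₂ p) =
      u⁻¹ • (Ψ (Φ p (k₁ * u)) (k₂ * u) - p - ((k₁ * u) • F₁ p + (k₂ * u) • F₂ p)) := fun p => by
    simp only [H, smul_sub, smul_add, smul_smul, mul_comm u⁻¹, mul_assoc, mul_inv_cancel₀ hu.ne',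
      mul_one]
  have hx₀ : ‖H x₀ - (k₁ • F₁ x₀ + k₂ • F₂ x₀)‖ ≤ η := by
    rw [hHG, norm_smul, Real.norm_of_nonneg (inv_nonneg.2 hu.le)]
    calc u⁻¹ * ‖_‖ ≤ u⁻¹ * (L ^ 2 * (k₁ * u + k₂ * u) ^ 2) := by
          gcongr; exact norm_twoStep_sub_sub_le hF₁ hF₂ hΦ0 hΦ hΨ0 hΨ hT₁ hT₂ x₀
      _ = L ^ 2 * (k₁ + k₂) ^ 2 * u := by rw [hT]; field_simp
      _ ≤ η := by
          have : 0 ≤ (L : ℝ) ^ 2 * (k₁ + k₂) ^ 2 * u := by positivity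
          linarith
  have hlip : LipschitzOnWith η (H - fun x => k₁ • F₁ x + k₂ • F₂ x) (closedBall x₀ ρ) :=
    (LipschitzWith.of_dist_le_mul fun p q => by
      rw [dist_eq_norm, dist_eq_norm, Pi.sub_apply, Pi.sub_apply, hHG, hHG, ← smul_sub,
        norm_smul, Real.norm_of_nonneg (inv_nonneg.2 hu.le)]
      calc u⁻¹ * ‖_‖ ≤ u⁻¹ * (6 * L ^ 2 * (k₁ * u + k₂ * u) ^ 2 * ‖p - q‖) := by
            gcongr
            exact norm_twoStep_sub_sub_sub_le hF₁ hF₂ hΦ0 hΦ hΨ0 hΨ hT₁ hT₂ (by linarith) p q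
        _ = 6 * L ^ 2 * (k₁ + k₂) ^ 2 * u * ‖p - q‖ := by rw [hT]; field_simp
        _ ≤ η * ‖p - q‖ := by gcongr).lipschitzOnWith
  obtain ⟨y, hy, hHy⟩ := hzero H hx₀ hlip
  exact ⟨y, hy, by simpa [H, hu.ne', sub_eq_zero] using hHy⟩

theorem exists_closed_twoStep_orbit [CompleteSpace E] {F₁ F₂ : E → E} {L : ℝ≥0}
    (hF₁ : C11BoundedWith L F₁) (hF₂ : C11BoundedWith L F₂) {k₁ k₂ : ℝ} (hk₁ : 0 ≤ k₁)
    (hk₂ : 0 ≤ k₂) {x₀ : E} {A : E →L[ℝ] E}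
    (hG : HasStrictFDerivAt (fun x => k₁ • F₁ x + k₂ • F₂ x) A x₀) (hA : Surjective A)
    (hG0 : k₁ • F₁ x₀ + k₂ • F₂ x₀ = 0) {ρ : ℝ} (hρ : 0 < ρ) :
    ∃ u > 0, ∃ γ₁ γ₂ : ℝ → E, IsIntegralCurveOn γ₁ (fun _ => F₁) (Icc 0 (k₁ * u)) ∧
      IsIntegralCurveOn γ₂ (fun _ => F₂) (Icc 0 (k₂ * u)) ∧ γ₂ 0 = γ₁ (k₁ * u) ∧
      γ₂ (k₂ * u) = γ₁ 0 ∧ MapsTo γ₁ (Icc 0 (k₁ * u)) (ball x₀ ρ) ∧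
      MapsTo γ₂ (Icc 0 (k₂ * u)) (ball x₀ ρ) := by
  obtain ⟨u, hu, hfix, huρ⟩ := (eventually_mem_nhdsWithin.and
    ((eventually_exists_twoStep_fixedPoint hF₁ hF₂ hk₁ hk₂ hG hA hG0 (half_pos hρ)).and
      (eventually_const_mul_lt (L * (k₁ + k₂)) (half_pos hρ)))).exists
  have hT₁ : 0 ≤ k₁ * u := mul_nonneg hk₁ hu.le
  have hT₂ : 0 ≤ k₂ * u := mul_nonneg hk₂ hu.le
  have hLT : L * (k₁ * u) + L * (k₂ * u) = L * (k₁ + k₂) * u := by ring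
  choose Φ hΦ0 hΦ using
    exists_isIntegralCurveOn_Icc_of_lipschitzWith hF₁.lipschitzWith hF₁.norm_le hT₁
  choose Ψ hΨ0 hΨ using
    exists_isIntegralCurveOn_Icc_of_lipschitzWith hF₂.lipschitzWith hF₂.norm_le hT₂
  obtain ⟨y, hy, hPy⟩ := hfix Φ Ψ hΦ0 hΦ hΨ0 hΨ
  refine ⟨u, hu, Φ y, Ψ (Φ y (k₁ * u)), hΦ y, hΨ _, hΨ0 _, by rw [hPy, hΦ0], ?_, ?_⟩
  · refine ((hΦ y).mapsTo_closedBall hF₁.norm_le).mono_right (closedBall_subset_ball' ?_)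
    rw [hΦ0]
    linarith [mem_closedBall.1 hy, mul_nonneg L.coe_nonneg hT₂]
  · have hy₁ := (hΦ y).mapsTo_closedBall hF₁.norm_le ⟨hT₁, le_rfl⟩
    rw [hΦ0, mem_closedBall] at hy₁
    refine ((hΨ _).mapsTo_closedBall hF₂.norm_le).mono_right (closedBall_subset_ball' ?_)
    rw [hΨ0]
    linarith [dist_triangle (Φ y (k₁ * u)) y x₀, mem_closedBall.1 hy]

/-- **Main theorem: two-cycles near non-degenerate stasis points.**
Let `f₁, f₂ : ℝⁿ → ℝⁿ` be `C²` vector fields, `x₀` a stasis point with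
`k₁ • f₁ x₀ + k₂ • f₂ x₀ = 0`, `k₁, k₂ > 0`, and suppose the derivative of
`x ↦ k₁ • f₁ x + k₂ • f₂ x` at `x₀` is non-singular.  Then for every `ε > 0`
the inclusion `x' ∈ {f₁ x, f₂ x}` has a two-cycle in the `ε`-ball around `x₀`:
a continuous `δ`-periodic `x : ℝ → ℝⁿ`, `0 < κ < δ`, following `f₁` on `[0, κ]`
and `f₂` on `[κ, δ]` (one-sided derivatives at the switching times), with
`‖x t - x₀‖ < ε` for all `t`. -/
theorem two_cycles_near_stasis_points
    (n : ℕ) (f₁ f₂ : EuclideanSpace ℝ (Fin n) → EuclideanSpace ℝ (Fin n))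
    (hf₁ : ContDiff ℝ 2 f₁) (hf₂ : ContDiff ℝ 2 f₂)
    (x₀ : EuclideanSpace ℝ (Fin n)) (k₁ k₂ : ℝ) (hk₁ : 0 < k₁) (hk₂ : 0 < k₂)
    (hstasis : k₁ • f₁ x₀ + k₂ • f₂ x₀ = 0)
    (hns : Function.Bijective
      ⇑(fderiv ℝ (fun x => k₁ • f₁ x + k₂ • f₂ x) x₀)) :
    ∀ ε > 0, ∃ (κ δ : ℝ) (x : ℝ → EuclideanSpace ℝ (Fin n)),
      0 < κ ∧ κ < δ ∧ Continuous x ∧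
      (∀ t, x (t + δ) = x t) ∧
      (∀ t ∈ Set.Icc (0 : ℝ) κ,
        HasDerivWithinAt x (f₁ (x t)) (Set.Icc (0 : ℝ) κ) t) ∧
      (∀ t ∈ Set.Icc κ δ,
        HasDerivWithinAt x (f₂ (x t)) (Set.Icc κ δ) t) ∧
      (∀ t, ‖x t - x₀‖ < ε) := by
  intro ε hε
  obtain ⟨F₁, L₁, hF₁, hF₁f⟩ := hf₁.exists_c11BoundedWith_eqOn x₀ one_pos
  obtain ⟨F₂, L₂, hF₂, hF₂f⟩ := hf₂.exists_c11BoundedWith_eqOn x₀ one_pos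
  have hFf : (fun x => k₁ • F₁ x + k₂ • F₂ x) =ᶠ[𝓝 x₀] fun x => k₁ • f₁ x + k₂ • f₂ x :=
    eventually_of_mem (closedBall_mem_nhds x₀ one_pos) fun x hx => by simp only [hF₁f hx, hF₂f hx]
  have hG := (((hf₁.const_smul k₁).add (hf₂.const_smul k₂)).contDiffAt.hasStrictFDerivAt
    (by norm_num)).congr_of_eventuallyEq hFf.symm
  obtain ⟨u, hu, γ₁, γ₂, hγ₁, hγ₂, hjoin, hclose, hball₁, hball₂⟩ :=
    exists_closed_twoStep_orbit (hF₁.mono le_sup_left) (hF₂.mono le_sup_right) hk₁.le hk₂.le hG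
      hns.2
      (hFf.eq_of_nhds.trans hstasis) (lt_min hε one_pos)
  obtain ⟨x, hxc, hxper, hx₁, hx₂, hxrange⟩ := exists_periodic_isIntegralCurveOn_of_concat
    (by positivity) (by positivity) hγ₁ hγ₂ hjoin hclose
  have hxball : ∀ t, x t ∈ ball x₀ (min ε 1) := fun t =>
    (hxrange.trans (union_subset hball₁.image_subset hball₂.image_subset)) (mem_range_self t)
  have hxF : ∀ t, x t ∈ closedBall x₀ 1 :=
    fun t => ball_subset_closedBall (ball_subset_ball (min_le_right _ _) (hxball t))
  refine ⟨k₁ * u, k₁ * u + k₂ * u, x, by positivity, by linarith [mul_pos hk₂ hu], hxc, hxper,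
    fun t ht => hF₁f (hxF t) ▸ hx₁ t ht, fun t ht => hF₂f (hxF t) ▸ hx₂ t ht,
    fun t => (mem_ball_iff_norm.1 (hxball t)).trans_le (min_le_left _ _)⟩
end

section
/- Let g : ℝⁿ → ℝⁿ be a C² vector field with g(0) = −c·e₁ for some c > 0, where e₁ = (1, 0, …, 0), and suppose the total derivative Dg(0) : ℝⁿ → ℝⁿ is non-singular. Then for every ε > 0 the differential inclusion x′ ∈ {e₁, g(x)} has a two-cycle contained in the ε-ball around the origin: there exist 0 < κ < δ and a continuous δ-periodic function x : ℝ → ℝⁿ with x′(t) = e₁ for t ∈ (0, κ), x′(t) = g(x(t)) for t ∈ (κ, δ) (with matching one-sided derivatives at the switching times), and ‖x(t)‖ < ε for all t. -/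
/-!
Put `A = Dg(0)` and look for the cycle as a `g`-trajectory `Y` on `[0, τ]` with
`Y τ - Y 0 = τ • g 0 = -(τ c) • e₁`, closed up by the segment from `Y τ` back to `Y 0`, traversed
with velocity `e₁` in time `κ = τ c`. Such arcs are the fixed points of the shooting map
`T y t = A⁻¹ (g 0 + ⨍ (A y - g ∘ y)) - ⨍ s, ∫₀ˢ g ∘ y + ∫₀ᵗ g ∘ y` on paths `[0, τ] → E`
(`⨍` is the mean over `[0, τ]`): a fixed point is a trajectory of `g`, and averaging the fixed-point
equation over `[0, τ]` leaves `A⁻¹ (g 0 - ⨍ g ∘ y) = 0`. By strict differentiability `g - A` has a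
small Lipschitz constant near `0`, and the integral terms are `O(τ)`-Lipschitz, so for small `τ`
the map `T` is a `½`-contraction of a small ball, which it maps into itself because
`‖T 0‖ ≤ τ ‖g 0‖ / 2`. The closing segment stays in the ball by convexity.
-/

open Set Metric Function Filter Topology intervalIntegral
open scoped NNReal Interval
open MeasureTheory (volume)

theorem exists_isFixedPt_mem_closedBall {α : Type*} [MetricSpace α] [CompleteSpace α]
    {f : α → α} {K : ℝ≥0} {x : α} {r : ℝ} (hK : K < 1)
    (hf : ∀ y ∈ closedBall x r, ∀ z ∈ closedBall x r, dist (f y) (f z) ≤ K * dist y z)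
    (hx : dist (f x) x ≤ (1 - K) * r) :
    ∃ y ∈ closedBall x r, IsFixedPt f y := by
  have hK' : (K : ℝ) < 1 := hK
  have hxr : x ∈ closedBall x r :=
    mem_closedBall_self (nonneg_of_mul_nonneg_right (dist_nonneg.trans hx) (by linarith))
  have hmaps : MapsTo f (closedBall x r) (closedBall x r) := fun y hy =>
    calc dist (f y) x ≤ dist (f y) (f x) + dist (f x) x := dist_triangle _ _ _
      _ ≤ K * r + (1 - K) * r := by gcongr; exact (hf y hy x hxr).trans (by gcongr; exact hy)
      _ = r := by ring
  have hcontr : ContractingWith K (hmaps.restrict f _ _) :=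
    ⟨hK, LipschitzWith.of_dist_le_mul fun y z => hf y y.2 z z.2⟩
  obtain ⟨y, hy, hfix, -⟩ :=
    hcontr.exists_fixedPoint' isClosed_closedBall.isComplete hmaps hxr (edist_ne_top _ _)
  exact ⟨y, hy, hfix⟩

theorem exists_periodic_eqOn_Icc {α : Type*} [TopologicalSpace α] {X : ℝ → α} {δ : ℝ}
    (hδ : 0 < δ) (hX : ContinuousOn X (Icc 0 δ)) (hXδ : X 0 = X δ) :
    ∃ x : ℝ → α, Continuous x ∧ Periodic x δ ∧ EqOn x X (Icc 0 δ) ∧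
      ∀ t, ∃ s ∈ Icc 0 δ, x t = X s := by
  have : Fact (0 < δ) := ⟨hδ⟩
  let x : ℝ → α := fun t => AddCircle.liftIco δ 0 X t
  have hper : Periodic x δ := fun t => by simp [x]
  have hIco : EqOn x X (Ico 0 δ) := fun t ht => AddCircle.liftIco_zero_coe_apply ht
  refine ⟨x, (AddCircle.liftIco_zero_continuous hXδ hX).comp (AddCircle.continuous_mk' δ), hper,
    fun t ht => ?_, fun t => ?_⟩
  · rcases ht.2.lt_or_eq with h | rfl
    · exact hIco ⟨ht.1, h⟩
    · rw [← zero_add t, hper, hIco ⟨le_rfl, hδ⟩, hXδ, zero_add]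
  · have hmem : (AddCircle.equivIco δ 0 t : ℝ) ∈ Ico 0 δ := by
      simpa using (AddCircle.equivIco δ 0 t).2
    exact ⟨_, Ico_subset_Icc_self hmem, rfl⟩

theorem ApproximatesLinearOn.norm_sub_le {𝕜 E F : Type*} [NontriviallyNormedField 𝕜]
    [NormedAddCommGroup E] [NormedSpace 𝕜 E] [NormedAddCommGroup F] [NormedSpace 𝕜 F]
    {f : E → F} {f' : E →L[𝕜] F} {s : Set E} {c : ℝ≥0}
    (hf : ApproximatesLinearOn f f' s c) {u v : E} (hu : u ∈ s) (hv : v ∈ s) :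
    ‖f u - f v‖ ≤ (‖f'‖ + c) * ‖u - v‖ := by
  simpa [Subtype.dist_eq, dist_eq_norm] using hf.lipschitz.dist_le_mul ⟨u, hu⟩ ⟨v, hv⟩

section

variable {E : Type*} [NormedAddCommGroup E] [NormedSpace ℝ E]

theorem norm_integral_sub_integral_le {f₁ f₂ : ℝ → E} {a b C : ℝ}
    (h₁ : IntervalIntegrable f₁ volume a b) (h₂ : IntervalIntegrable f₂ volume a b)
    (h : ∀ s ∈ Ι a b, ‖f₁ s - f₂ s‖ ≤ C) :
    ‖(∫ s in a..b, f₁ s) - ∫ s in a..b, f₂ s‖ ≤ C * |b - a| := by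
  rw [← integral_sub h₁ h₂]
  exact norm_integral_le_of_norm_le_const h

/-- A two-cycle of the inclusion `x' ∈ {g₁ x, g₂ x}` with switching time `κ` and period `δ`. -/
structure IsTwoCycle (g₁ g₂ : E → E) (κ δ : ℝ) (x : ℝ → E) : Prop where
  pos : 0 < κ
  lt_period : κ < δ
  continuous : Continuous x
  periodic : Periodic x δ
  hasDerivWithinAt_fst : ∀ t ∈ Icc 0 κ, HasDerivWithinAt x (g₁ (x t)) (Icc 0 κ) t
  hasDerivWithinAt_snd : ∀ t ∈ Icc κ δ, HasDerivWithinAt x (g₂ (x t)) (Icc κ δ) t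

theorem exists_isTwoCycle_const_of_trajectory {g : E → E} {v : E} {κ τ : ℝ} (hκ : 0 < κ)
    (hτ : 0 < τ) {Y : ℝ → E} (hY : ∀ t ∈ Icc 0 τ, HasDerivAt Y (g (Y t)) t)
    (hYv : Y τ + κ • v = Y 0) {s : Set E} (hs : Convex ℝ s)
    (hYs : ∀ t ∈ Icc 0 τ, Y t ∈ s) :
    ∃ x, IsTwoCycle (fun _ => v) g κ (κ + τ) x ∧ ∀ t, x t ∈ s := by
  let X : ℝ → E := fun t => Y (max t κ - κ) + (min t κ - κ) • v
  have hX_fst : ∀ t ≤ κ, X t = Y 0 + (t - κ) • v := fun t ht => by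
    simp only [X, max_eq_right ht, min_eq_left ht, sub_self]
  have hX_snd : ∀ t, κ ≤ t → X t = Y (t - κ) := fun t ht => by
    simp only [X, max_eq_left ht, min_eq_right ht, sub_self, zero_smul, add_zero]
  have hXc : ContinuousOn X (Icc 0 (κ + τ)) := by
    have hYc : ContinuousOn Y (Icc 0 τ) := fun t ht => (hY t ht).continuousAt.continuousWithinAt
    refine ContinuousOn.add (hYc.comp (by fun_prop) fun t ht => ?_) (by fun_prop)
    exact ⟨by simp, by simp; constructor <;> linarith [ht.2]⟩
  have hXδ : X 0 = X (κ + τ) := by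
    rw [hX_fst 0 hκ.le, hX_snd _ (by linarith), add_sub_cancel_left, ← hYv]
    module
  obtain ⟨x, hxc, hxp, hxX, hxs⟩ := exists_periodic_eqOn_Icc (by positivity) hXc hXδ
  refine ⟨x, ⟨hκ, by linarith, hxc, hxp, fun t ht => ?_, fun t ht => ?_⟩, fun t => ?_⟩
  · have hEq : EqOn x (fun u => Y 0 + (u - κ) • v) (Icc 0 κ) := fun u hu =>
      (hxX ⟨hu.1, by linarith [hu.2]⟩).trans (hX_fst u hu.2)
    have hd : HasDerivAt (fun u => Y 0 + (u - κ) • v) v t := by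
      simpa using (((hasDerivAt_id t).sub_const κ).smul_const v).const_add (Y 0)
    exact hd.hasDerivWithinAt.congr hEq (hEq ht)
  · have hEq : EqOn x (fun u => Y (u - κ)) (Icc κ (κ + τ)) := fun u hu =>
      (hxX ⟨by linarith [hu.1], hu.2⟩).trans (hX_snd u hu.1)
    have hd := (hY (t - κ) ⟨by linarith [ht.1], by linarith [ht.2]⟩).comp_sub_const t κ
    rw [hEq ht]
    exact hd.hasDerivWithinAt.congr hEq (hEq ht)
  · obtain ⟨u, hu, hxu⟩ := hxs t
    rw [hxu]
    rcases le_total u κ with h | h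
    · have hmem := hs.add_smul_sub_mem (hYs τ ⟨hτ.le, le_rfl⟩) (hYs 0 ⟨le_rfl, hτ.le⟩)
        ⟨div_nonneg hu.1 hκ.le, (div_le_one hκ).2 h⟩
      rw [hX_fst u h]
      convert hmem using 1
      rw [← hYv, add_sub_cancel_left, smul_smul, div_mul_cancel₀ u hκ.ne']
      module
    · rw [hX_snd u h]
      exact hYs _ ⟨by linarith, by linarith [hu.2]⟩

noncomputable def shootingMap (g : E → E) (A : E ≃L[ℝ] E) (τ : ℝ) (y : ℝ → E) (t : ℝ) :
    E :=
  A.symm (g 0 + τ⁻¹ • ∫ s in 0..τ, (A (y s) - g (y s)))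
    - τ⁻¹ • (∫ s in 0..τ, ∫ u in 0..s, g (y u)) + ∫ s in 0..t, g (y s)

variable {g : E → E} {A : E ≃L[ℝ] E} {τ : ℝ} {y : ℝ → E}

theorem shootingMap_sub_shootingMap_zero :
    shootingMap g A τ y τ - shootingMap g A τ y 0 = ∫ s in 0..τ, g (y s) := by
  simp [shootingMap]

theorem norm_shootingMap_sub_le (hg : Continuous g) {η : ℝ≥0} {r d : ℝ}
    (hgA : ApproximatesLinearOn g (A : E →L[ℝ] E) (closedBall 0 r) η) (hτ : 0 < τ)
    {z : ℝ → E} (hy : Continuous y) (hz : Continuous z)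
    (hyr : ∀ s, y s ∈ closedBall 0 r) (hzr : ∀ s, z s ∈ closedBall 0 r)
    (hd : ∀ s, ‖y s - z s‖ ≤ d) {t : ℝ} (ht : t ∈ Icc 0 τ) :
    ‖shootingMap g A τ y t - shootingMap g A τ z t‖
      ≤ (‖(A.symm : E →L[ℝ] E)‖ * η + 2 * τ * (‖(A : E →L[ℝ] E)‖ + η)) * d := by
  set L := ‖(A : E →L[ℝ] E)‖ + η
  have hd0 : 0 ≤ d := (norm_nonneg _).trans (hd 0)
  have hL0 : 0 ≤ L := by positivity
  have hgy := hg.comp hy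
  have hgz := hg.comp hz
  have hlip : ∀ s, ‖g (y s) - g (z s)‖ ≤ L * d := fun s =>
    (hgA.norm_sub_le (hyr s) (hzr s)).trans (by gcongr; exact hd s)
  have hG : ∀ t ∈ Icc 0 τ,
      ‖(∫ s in 0..t, g (y s)) - ∫ s in 0..t, g (z s)‖ ≤ L * d * τ :=
    fun t ht => (norm_integral_sub_integral_le (hgy.intervalIntegrable _ _)
      (hgz.intervalIntegrable _ _) fun s _ => hlip s).trans <| by
        rw [sub_zero, abs_of_nonneg ht.1]; gcongr; exact ht.2
  have hΨ : ‖(∫ s in 0..τ, ∫ u in 0..s, g (y u)) - ∫ s in 0..τ, ∫ u in 0..s, g (z u)‖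
      ≤ L * d * τ * τ :=
    (norm_integral_sub_integral_le
      ((continuous_primitive (fun _ _ => hgy.intervalIntegrable _ _) 0).intervalIntegrable _ _)
      ((continuous_primitive (fun _ _ => hgz.intervalIntegrable _ _) 0).intervalIntegrable _ _)
      fun s hs => hG s (by rw [uIoc_of_le hτ.le] at hs; exact Ioc_subset_Icc_self hs)).trans
      (by rw [sub_zero, abs_of_pos hτ])
  have hΦ : ‖(∫ s in 0..τ, (A (y s) - g (y s))) - ∫ s in 0..τ, (A (z s) - g (z s))‖
      ≤ η * d * τ := by
    refine (norm_integral_sub_integral_le (f₁ := fun s => A (y s) - g (y s))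
      (f₂ := fun s => A (z s) - g (z s))
      (((A.continuous.comp hy).sub hgy).intervalIntegrable _ _)
      (((A.continuous.comp hz).sub hgz).intervalIntegrable _ _) fun s _ => ?_).trans
      (by rw [sub_zero, abs_of_pos hτ])
    have hyz : -((A (y s) - g (y s)) - (A (z s) - g (z s)))
        = g (y s) - g (z s) - A (y s - z s) := by
      rw [map_sub]; abel
    rw [← norm_neg, hyz]
    exact (hgA _ (hyr s) _ (hzr s)).trans (by gcongr; exact hd s)
  have hsplit : shootingMap g A τ y t - shootingMap g A τ z t
      = A.symm (τ⁻¹ • ((∫ s in 0..τ, (A (y s) - g (y s)))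
            - ∫ s in 0..τ, (A (z s) - g (z s))))
        - τ⁻¹ • ((∫ s in 0..τ, ∫ u in 0..s, g (y u))
            - ∫ s in 0..τ, ∫ u in 0..s, g (z u))
        + ((∫ s in 0..t, g (y s)) - ∫ s in 0..t, g (z s)) := by
    simp only [shootingMap, map_add, map_sub, map_smul]
    module
  rw [hsplit]
  refine (norm_add_le_of_le (norm_sub_le_of_le ((A.symm : E →L[ℝ] E).le_opNorm _) le_rfl)
    (hG t ht)).trans ?_
  rw [norm_smul, norm_smul, norm_inv, Real.norm_of_nonneg hτ.le]
  calc _ ≤ ‖(A.symm : E →L[ℝ] E)‖ * (τ⁻¹ * (η * d * τ)) + τ⁻¹ * (L * d * τ * τ)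
        + L * d * τ := by gcongr
    _ = _ := by field_simp; ring

variable [CompleteSpace E]

theorem hasDerivAt_shootingMap (hg : Continuous g) (hy : Continuous y) (t : ℝ) :
    HasDerivAt (shootingMap g A τ y) (g (y t)) t :=
  ((hg.comp hy).integral_hasStrictDerivAt 0 t).hasDerivAt.const_add _

theorem continuous_shootingMap (hg : Continuous g) (hy : Continuous y) :
    Continuous (shootingMap g A τ y) :=
  continuous_iff_continuousAt.2 fun t => (hasDerivAt_shootingMap hg hy t).continuousAt

theorem shootingMap_zero (hτ : τ ≠ 0) (t : ℝ) :
    shootingMap g A τ 0 t = (t - τ / 2) • g 0 := by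
  simp only [shootingMap, Pi.zero_apply, map_zero, zero_sub, intervalIntegral.integral_neg,
    intervalIntegral.integral_const, intervalIntegral.integral_smul_const, integral_id, sub_zero,
    smul_neg, smul_smul, inv_mul_cancel₀ hτ, one_smul, add_neg_cancel]
  match_scalars
  field_simp
  ring

theorem integral_comp_eq_smul_of_eqOn_shootingMap (hg : Continuous g) (hy : Continuous y)
    (hτ : 0 < τ) (hfix : EqOn (shootingMap g A τ y) y (Icc 0 τ)) :
    ∫ s in 0..τ, g (y s) = τ • g 0 := by
  have hgy : IntervalIntegrable (fun s => g (y s)) volume 0 τ :=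
    (hg.comp hy).intervalIntegrable _ _
  have hAy : ∫ s in 0..τ, (A (y s) - g (y s))
      = A (∫ s in 0..τ, y s) - ∫ s in 0..τ, g (y s) := by
    have hA : IntervalIntegrable (fun s => A (y s)) volume 0 τ :=
      (A.continuous.comp hy).intervalIntegrable _ _
    have hcomm := (A : E →L[ℝ] E).intervalIntegral_comp_comm
      (hy.intervalIntegrable (μ := volume) 0 τ)
    rw [ContinuousLinearEquiv.coe_coe] at hcomm
    rw [integral_sub hA hgy, hcomm]
  have hmean : ∫ s in 0..τ, y s
      = τ • A.symm (g 0 + τ⁻¹ • ∫ s in 0..τ, (A (y s) - g (y s))) := by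
    rw [← integral_congr (hfix.mono (uIcc_of_le hτ.le).subset)]
    have hG : IntervalIntegrable (fun s => ∫ u in 0..s, g (y u)) volume 0 τ :=
      (continuous_primitive (fun _ _ => (hg.comp hy).intervalIntegrable _ _) 0).intervalIntegrable
        _ _
    simp only [shootingMap]
    rw [integral_add intervalIntegrable_const hG, integral_const, sub_zero, smul_sub,
      smul_smul, mul_inv_cancel₀ hτ.ne', one_smul, sub_add_cancel]
  have hAmean := congrArg A hmean
  rw [map_smul, A.apply_symm_apply, hAy, smul_add, smul_smul, mul_inv_cancel₀ hτ.ne',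
    one_smul] at hAmean
  linear_combination (norm := module) hAmean

theorem exists_trajectory_sub_eq_smul_of_approximatesLinearOn (hg : Continuous g)
    {η : ℝ≥0} {r : ℝ} (hgA : ApproximatesLinearOn g (A : E →L[ℝ] E) (closedBall 0 r) η) (hτ : 0 < τ)
    (hη : ‖(A.symm : E →L[ℝ] E)‖ * η ≤ 1 / 4) (hτA : τ * (‖(A : E →L[ℝ] E)‖ + η) ≤ 1 / 8)
    (hτg : τ * ‖g 0‖ ≤ r) :
    ∃ Y : ℝ → E, (∀ t ∈ Icc 0 τ, HasDerivAt Y (g (Y t)) t) ∧ Y τ - Y 0 = τ • g 0 ∧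
      ∀ t ∈ Icc 0 τ, ‖Y t‖ ≤ r := by
  let ext : C(Icc 0 τ, E) → C(ℝ, E) := ContinuousMap.IccExtend hτ.le
  let T : C(Icc 0 τ, E) → C(Icc 0 τ, E) := fun y =>
    ⟨fun t => shootingMap g A τ (ext y) t,
      (continuous_shootingMap hg (ext y).continuous).comp continuous_subtype_val⟩
  have hext_mem : ∀ y ∈ closedBall (0 : C(Icc 0 τ, E)) r, ∀ s, ext y s ∈ closedBall 0 r :=
    fun y hy s => mem_closedBall_zero_iff.2 <|
      (y.norm_coe_le_norm _).trans (mem_closedBall_zero_iff.1 hy)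
  have hext_sub : ∀ y z s, ‖ext y s - ext z s‖ ≤ dist y z := fun y z s => by
    rw [dist_eq_norm]; exact (y - z).norm_coe_le_norm _
  have hcontr : ∀ y ∈ closedBall 0 r, ∀ z ∈ closedBall 0 r,
      dist (T y) (T z) ≤ (1 / 2 : ℝ≥0) * dist y z := fun y hy z hz => by
    rw [ContinuousMap.dist_le (by positivity)]
    intro t
    rw [dist_eq_norm]
    refine (norm_shootingMap_sub_le hg hgA hτ (ext y).continuous (ext z).continuous
      (hext_mem y hy) (hext_mem z hz) (hext_sub y z) t.2).trans ?_
    push_cast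
    gcongr
    linarith
  have hT0 : dist (T 0) 0 ≤ (1 - (1 / 2 : ℝ≥0)) * r := by
    have hr : 0 ≤ r := (by positivity : 0 ≤ τ * ‖g 0‖).trans hτg
    rw [ContinuousMap.dist_le (by norm_num; positivity)]
    intro t
    rw [dist_eq_norm]
    change ‖shootingMap g A τ 0 t - 0‖ ≤ _
    rw [sub_zero, shootingMap_zero hτ.ne', norm_smul, Real.norm_eq_abs]
    have : |(t : ℝ) - τ / 2| ≤ τ / 2 := abs_le.2 ⟨by linarith [t.2.1], by linarith [t.2.2]⟩
    calc _ ≤ τ / 2 * ‖g 0‖ := by gcongr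
      _ ≤ _ := by norm_num; linarith
  obtain ⟨y, hy, hfix⟩ := exists_isFixedPt_mem_closedBall (by norm_num) hcontr hT0
  have hYy : EqOn (shootingMap g A τ (ext y)) (ext y) (Icc 0 τ) := fun t ht =>
    (congrArg (· ⟨t, ht⟩) hfix).trans (IccExtend_of_mem _ _ ht).symm
  refine ⟨shootingMap g A τ (ext y), fun t ht => ?_, ?_, fun t ht => ?_⟩
  · rw [hYy ht]
    exact hasDerivAt_shootingMap hg (ext y).continuous t
  · rw [shootingMap_sub_shootingMap_zero]
    exact integral_comp_eq_smul_of_eqOn_shootingMap hg (ext y).continuous hτ hYy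
  · rw [hYy ht]
    exact mem_closedBall_zero_iff.1 (hext_mem y hy t)

theorem HasStrictFDerivAt.exists_trajectory_sub_eq_smul (hg : Continuous g)
    (hgA : HasStrictFDerivAt g (A : E →L[ℝ] E) 0) {r : ℝ} (hr : 0 < r) :
    ∃ τ > 0, ∃ Y : ℝ → E, (∀ t ∈ Icc 0 τ, HasDerivAt Y (g (Y t)) t) ∧
      Y τ - Y 0 = τ • g 0 ∧ ∀ t ∈ Icc 0 τ, ‖Y t‖ ≤ r := by
  set η : ℝ≥0 := (4 * (‖(A.symm : E →L[ℝ] E)‖₊ + 1))⁻¹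
  have hη : ‖(A.symm : E →L[ℝ] E)‖ * η ≤ 1 / 4 := by
    simp only [η, NNReal.coe_inv, NNReal.coe_mul, NNReal.coe_add, coe_nnnorm, NNReal.coe_one]
    rw [← div_eq_mul_inv, div_le_iff₀ (by positivity)]
    push_cast; linarith
  obtain ⟨s, hs, hgs⟩ := hgA.approximates_deriv_on_nhds (c := η) (Or.inr (by positivity))
  obtain ⟨ρ, hρ, hρs⟩ := nhds_basis_closedBall.mem_iff.1 hs
  have hsmall : ∀ a c : ℝ, 0 < c → ∀ᶠ τ in 𝓝 (0 : ℝ), τ * a ≤ c := fun a c hc =>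
    ((continuous_mul_const a).tendsto' 0 0 (zero_mul a)).eventually (eventually_le_nhds hc)
  obtain ⟨τ, ⟨h₁, h₂⟩, hτ⟩ := (((hsmall _ (1 / 8) (by norm_num)).and
    (hsmall ‖g 0‖ (min r ρ) (lt_min hr hρ))).filter_mono nhdsWithin_le_nhds |>.and
    self_mem_nhdsWithin).exists (f := 𝓝[>] (0 : ℝ))
  obtain ⟨Y, hY, hYτ, hYr⟩ := exists_trajectory_sub_eq_smul_of_approximatesLinearOn hg
    (hgs.mono_set ((closedBall_subset_closedBall (min_le_right r ρ)).trans hρs)) hτ hη h₁ h₂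
  exact ⟨τ, hτ, Y, hY, hYτ, fun t ht => (hYr t ht).trans (min_le_left r ρ)⟩

end

/-- **Rectified normal form of the main theorem.**
Let `g : ℝⁿ → ℝⁿ` be a `C²` vector field with `g 0 = -c • e₁` for some `c > 0`
and with `Dg 0` non-singular.  Then for every `ε > 0` the inclusion
`x' ∈ {e₁, g x}` has a two-cycle in the `ε`-ball around the origin: a continuous
`δ`-periodic `x : ℝ → ℝⁿ`, `0 < κ < δ`, following the constant field `e₁` on
`[0, κ]` and `g` on `[κ, δ]` (one-sided derivatives at the switching times),
with `‖x t‖ < ε` for all `t`. -/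
theorem two_cycles_rectified_normal_form
    (n : ℕ) [NeZero n]
    (g : EuclideanSpace ℝ (Fin n) → EuclideanSpace ℝ (Fin n))
    (hg : ContDiff ℝ 2 g) (c : ℝ) (hc : 0 < c)
    (hg0 : g 0 = (-c) • EuclideanSpace.single (0 : Fin n) (1 : ℝ))
    (hns : Function.Bijective ⇑(fderiv ℝ g 0)) :
    ∀ ε > 0, ∃ (κ δ : ℝ) (x : ℝ → EuclideanSpace ℝ (Fin n)),
      0 < κ ∧ κ < δ ∧ Continuous x ∧
      (∀ t, x (t + δ) = x t) ∧
      (∀ t ∈ Set.Icc (0 : ℝ) κ,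
        HasDerivWithinAt x (EuclideanSpace.single (0 : Fin n) (1 : ℝ))
          (Set.Icc (0 : ℝ) κ) t) ∧
      (∀ t ∈ Set.Icc κ δ,
        HasDerivWithinAt x (g (x t)) (Set.Icc κ δ) t) ∧
      (∀ t, ‖x t‖ < ε) := by
  intro ε hε
  set e := EuclideanSpace.single (0 : Fin n) (1 : ℝ)
  let A := ContinuousLinearEquiv.ofBijective (fderiv ℝ g 0) (LinearMap.ker_eq_bot.2 hns.1)
    (LinearMap.range_eq_top.2 hns.2)
  have hgA : HasStrictFDerivAt g (A : _ →L[ℝ] _) 0 := by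
    rw [ContinuousLinearEquiv.coe_ofBijective]
    exact hg.contDiffAt.hasStrictFDerivAt (by norm_num)
  obtain ⟨τ, hτ, Y, hY, hYτ, hYr⟩ :=
    hgA.exists_trajectory_sub_eq_smul hg.continuous (half_pos hε)
  have hYe : Y τ + (τ * c) • e = Y 0 := by
    rw [hg0] at hYτ
    linear_combination (norm := module) hYτ
  obtain ⟨x, hx, hxr⟩ := exists_isTwoCycle_const_of_trajectory (mul_pos hτ hc) hτ hY hYe
    (convex_closedBall 0 (ε / 2)) fun t ht => mem_closedBall_zero_iff.2 (hYr t ht)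
  exact ⟨_, _, x, hx.pos, hx.lt_period, hx.continuous, hx.periodic, hx.hasDerivWithinAt_fst,
    hx.hasDerivWithinAt_snd, fun t => (mem_closedBall_zero_iff.1 (hxr t)).trans_lt
      (half_lt_self hε)⟩
end
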